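/- Completeness of the trace-based Hoare logic: for any While statement s, state predicate U and setoid trace predicate P, if for all states σ and traces τ, U σ and (s,σ) ⇒ τ imply that τ satisfies P, then ⊢{U} s {P} is derivable. -/

import Mathlib

namespace WhileTrace

/-- Program variables. -/
abbrev Var := ℕ
/-- States assign integer values to variables. -/
abbrev State := Var → ℤ
/-- Arithmetic expressions, modelled by their integer value in each state. -/
abbrev Expr := State → ℤ

/-- State update `σ[x ↦ v]`. -/
def update (σ : State) (x : Var) (v : ℤ) : State := Function.update σ x v

/-- Reading an expression as a boolean: `σ ⊨ e`. -/
def istrue (e : Expr) (σ : State) : Prop := e σ ≠ 0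

/-- Traces: nonempty, possibly infinite sequences of states
(a head state together with a possibly infinite sequence of further states). -/
def Trace : Type := State × Stream'.Seq State

/-- The singleton trace `⟨σ⟩`. -/
def Trace.single (σ : State) : Trace := (σ, Stream'.Seq.nil)

/-- The cons trace `σ :: τ`. -/
def Trace.cons (σ : State) (τ : Trace) : Trace := (σ, Stream'.Seq.cons τ.1 τ.2)

/-- The first state of a trace. -/
def Trace.hd (τ : Trace) : State := τ.1

/-- Bisimilarity of traces `τ ≈ τ'`, as a greatest fixed point:
there is a relation `R` relating the two traces that is consistent with the
coinductive rules `⟨σ⟩ ≈ ⟨σ⟩` and `σ::τ ≈ σ::τ'` whenever `τ ≈ τ'`. -/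
def Bisim (τ τ' : Trace) : Prop :=
  ∃ R : Trace → Trace → Prop, R τ τ' ∧
    ∀ a b, R a b →
      (∃ σ, a = Trace.single σ ∧ b = Trace.single σ) ∨
      (∃ σ a' b', a = Trace.cons σ a' ∧ b = Trace.cons σ b' ∧ R a' b')

/-- Finiteness `τ ↓ σ` : `τ` is finite with last state `σ` (inductive). -/
inductive Converges : Trace → State → Prop
  | single (σ : State) : Converges (Trace.single σ) σ
  | cons (σ' : State) {τ : Trace} {σ : State} :
      Converges τ σ → Converges (Trace.cons σ' τ) σ

/-- Infiniteness of a trace (coinductive, as a greatest fixed point). -/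
def InfiniteT (τ : Trace) : Prop :=
  ∃ P : Trace → Prop, P τ ∧ ∀ a, P a → ∃ σ a', a = Trace.cons σ a' ∧ P a'

/-- Statements of the While language. -/
inductive Stmt : Type
  | assign (x : Var) (e : Expr)
  | skip
  | seq (s₀ s₁ : Stmt)
  | ifte (e : Expr) (st sf : Stmt)
  | whileDo (e : Expr) (st : Stmt)

/-- A pair of relations `(E, ES)` is consistent with the rules of evaluation
and extended evaluation: every claimed evaluation is backed by one of the
coinductive rules, with premises again in `(E, ES)`. -/
def EvalConsistent (E : Stmt → State → Trace → Prop)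
    (ES : Stmt → Trace → Trace → Prop) : Prop :=
  (∀ x e σ τ, E (.assign x e) σ τ →
      τ = Trace.cons σ (Trace.single (update σ x (e σ)))) ∧
  (∀ σ τ, E .skip σ τ → τ = Trace.single σ) ∧
  (∀ s₀ s₁ σ τ', E (.seq s₀ s₁) σ τ' → ∃ τ, E s₀ σ τ ∧ ES s₁ τ τ') ∧
  (∀ e st sf σ τ, E (.ifte e st sf) σ τ →
      (istrue e σ ∧ ES st (Trace.cons σ (Trace.single σ)) τ) ∨
      (¬ istrue e σ ∧ ES sf (Trace.cons σ (Trace.single σ)) τ)) ∧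
  (∀ e st σ τ', E (.whileDo e st) σ τ' →
      (istrue e σ ∧ ∃ τ, ES st (Trace.cons σ (Trace.single σ)) τ ∧
        ES (.whileDo e st) τ τ') ∨
      (¬ istrue e σ ∧ τ' = Trace.cons σ (Trace.single σ))) ∧
  (∀ s τ τ', ES s τ τ' →
      (∃ σ, τ = Trace.single σ ∧ E s σ τ') ∨
      (∃ σ τ₀ τ₀', τ = Trace.cons σ τ₀ ∧ τ' = Trace.cons σ τ₀' ∧ ES s τ₀ τ₀'))

/-- Evaluation `(s,σ) ⇒ τ` : greatest fixed point of the mutual coinductive rules. -/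
def Exec (s : Stmt) (σ : State) (τ : Trace) : Prop :=
  ∃ E ES, EvalConsistent E ES ∧ E s σ τ

/-- Extended evaluation `(s,τ) ⇒* τ'`. -/
def ExecSeq (s : Stmt) (τ τ' : Trace) : Prop :=
  ∃ E ES, EvalConsistent E ES ∧ ES s τ τ'

/-- The standard inductive state-based big-step semantics `(s,σ) ⇓ σ'`. -/
inductive BigStep : Stmt → State → State → Prop
  | assign (x : Var) (e : Expr) (σ : State) :
      BigStep (.assign x e) σ (update σ x (e σ))
  | skip (σ : State) : BigStep .skip σ σ
  | seq {s₀ s₁ : Stmt} {σ σ' σ'' : State} :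
      BigStep s₀ σ σ' → BigStep s₁ σ' σ'' → BigStep (.seq s₀ s₁) σ σ''
  | ifTrue {e : Expr} {st sf : Stmt} {σ σ' : State} :
      istrue e σ → BigStep st σ σ' → BigStep (.ifte e st sf) σ σ'
  | ifFalse {e : Expr} {st sf : Stmt} {σ σ' : State} :
      ¬ istrue e σ → BigStep sf σ σ' → BigStep (.ifte e st sf) σ σ'
  | whileTrue {e : Expr} {st : Stmt} {σ σ' σ'' : State} :
      istrue e σ → BigStep st σ σ' → BigStep (.whileDo e st) σ' σ'' →
      BigStep (.whileDo e st) σ σ''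
  | whileFalse {e : Expr} {st : Stmt} {σ : State} :
      ¬ istrue e σ → BigStep (.whileDo e st) σ σ

/-- State predicates. -/
abbrev StatePred := State → Prop
/-- Trace predicates. -/
abbrev TracePred := Trace → Prop

/-- A setoid trace predicate respects bisimilarity. -/
def IsSetoidPred (P : TracePred) : Prop := ∀ τ τ', P τ → Bisim τ τ' → P τ'

/-- The singleton predicate `[U]`. -/
def Sglt (U : StatePred) : TracePred :=
  fun τ => ∃ σ, U σ ∧ τ = Trace.single σ

/-- The doubleton predicate `⟨U⟩`. -/
def Dup (U : StatePred) : TracePred :=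
  fun τ => ∃ σ, U σ ∧ τ = Trace.cons σ (Trace.single σ)

/-- The update predicate `U[x ↦ e]`. -/
def UpdPred (U : StatePred) (x : Var) (e : Expr) : TracePred :=
  fun τ => ∃ σ, U σ ∧ τ = Trace.cons σ (Trace.single (update σ x (e σ)))

/-- `Q follows τ in τ'` (coinductive, as a greatest fixed point). -/
def Follows (Q : TracePred) (τ τ' : Trace) : Prop :=
  ∃ R : Trace → Trace → Prop, R τ τ' ∧
    ∀ a b, R a b →
      (∃ σ, a = Trace.single σ ∧ b.hd = σ ∧ Q b) ∨
      (∃ σ a' b', a = Trace.cons σ a' ∧ b = Trace.cons σ b' ∧ R a' b')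

/-- The chop `P ** Q`. -/
def Chop (P Q : TracePred) : TracePred :=
  fun τ' => ∃ τ, P τ ∧ Follows Q τ τ'

/-- The iteration `P*` (coinductive, as a greatest fixed point). -/
def Iter (P : TracePred) : TracePred := fun τ =>
  ∃ X : TracePred, X τ ∧
    ∀ a, X a → Sglt (fun _ => True) a ∨ ∃ τ₀, P τ₀ ∧ Follows X τ₀ a

/-- `Last P` : states that are the last state of some finite trace satisfying `P`. -/
def Last (P : TracePred) : StatePred := fun σ => ∃ τ, P τ ∧ Converges τ σ

/-- The trace predicate `finite`. -/
def FiniteT : TracePred := fun τ => ∃ σ, Converges τ σ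

/-- Derivability `⊢ {U} s {P}` in the trace-based Hoare logic. -/
inductive THoare : StatePred → Stmt → TracePred → Prop
  | assign (U : StatePred) (x : Var) (e : Expr) :
      THoare U (.assign x e) (UpdPred U x e)
  | skip (U : StatePred) : THoare U .skip (Sglt U)
  | seq {U V : StatePred} {s₀ s₁ : Stmt} {P Q : TracePred} :
      THoare U s₀ (Chop P (Sglt V)) → THoare V s₁ Q →
      THoare U (.seq s₀ s₁) (Chop P Q)
  | ifte {U : StatePred} {e : Expr} {st sf : Stmt} {P : TracePred} :
      THoare (fun σ => istrue e σ ∧ U σ) st P →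
      THoare (fun σ => ¬ istrue e σ ∧ U σ) sf P →
      THoare U (.ifte e st sf) (Chop (Dup U) P)
  | whileDo {U I : StatePred} {e : Expr} {st : Stmt} {P : TracePred} :
      (∀ σ, U σ → I σ) →
      THoare (fun σ => istrue e σ ∧ I σ) st (Chop P (Sglt I)) →
      THoare U (.whileDo e st)
        (Chop (Dup U)
          (Chop (Iter (Chop P (Dup I))) (Sglt (fun σ => ¬ istrue e σ))))
  | conseq {U U' : StatePred} {s : Stmt} {P P' : TracePred} :
      (∀ σ, U σ → U' σ) → THoare U' s P' → (∀ τ, P' τ → P τ) →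
      THoare U s P
  | exist {Z : Type} {U : Z → StatePred} {s : Stmt} {P : Z → TracePred} :
      (∀ z, THoare (U z) s (P z)) →
      THoare (fun σ => ∃ z, U z σ) s (fun τ => ∃ z, P z τ)

/-- Derivability `⊢p {U} s {Z}` in the state-based partial-correctness Hoare logic. -/
inductive PHoare : StatePred → Stmt → StatePred → Prop
  | assign (Z : StatePred) (x : Var) (e : Expr) :
      PHoare (fun σ => Z (update σ x (e σ))) (.assign x e) Z
  | skip (U : StatePred) : PHoare U .skip U
  | seq {U V Z : StatePred} {s₀ s₁ : Stmt} :
      PHoare U s₀ V → PHoare V s₁ Z → PHoare U (.seq s₀ s₁) Z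
  | ifte {U Z : StatePred} {e : Expr} {st sf : Stmt} :
      PHoare (fun σ => istrue e σ ∧ U σ) st Z →
      PHoare (fun σ => ¬ istrue e σ ∧ U σ) sf Z →
      PHoare U (.ifte e st sf) Z
  | whileDo {I : StatePred} {e : Expr} {st : Stmt} :
      PHoare (fun σ => istrue e σ ∧ I σ) st I →
      PHoare I (.whileDo e st) (fun σ => I σ ∧ ¬ istrue e σ)
  | exist {Z : Type} {U V : Z → StatePred} {s : Stmt} :
      (∀ z, PHoare (U z) s (V z)) →
      PHoare (fun σ => ∃ z, U z σ) s (fun σ => ∃ z, V z σ)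
  | conseq {U U' Z Z' : StatePred} {s : Stmt} :
      (∀ σ, U σ → U' σ) → PHoare U' s Z' → (∀ σ, Z' σ → Z σ) →
      PHoare U s Z

/-- Derivability `⊢t {U} s {Z}` in the state-based total-correctness Hoare
logic, with the `while-fun` rule. -/
inductive TotHoare : StatePred → Stmt → StatePred → Prop
  | assign (Z : StatePred) (x : Var) (e : Expr) :
      TotHoare (fun σ => Z (update σ x (e σ))) (.assign x e) Z
  | skip (U : StatePred) : TotHoare U .skip U
  | seq {U V Z : StatePred} {s₀ s₁ : Stmt} :
      TotHoare U s₀ V → TotHoare V s₁ Z → TotHoare U (.seq s₀ s₁) Z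
  | ifte {U Z : StatePred} {e : Expr} {st sf : Stmt} :
      TotHoare (fun σ => istrue e σ ∧ U σ) st Z →
      TotHoare (fun σ => ¬ istrue e σ ∧ U σ) sf Z →
      TotHoare U (.ifte e st sf) Z
  | whileFun {I : StatePred} {e : Expr} {st : Stmt} (t : State → ℕ) (m : ℕ) :
      (∀ n : ℕ, TotHoare (fun σ => istrue e σ ∧ I σ ∧ t σ = n) st
        (fun σ => I σ ∧ t σ < n)) →
      TotHoare (fun σ => I σ ∧ t σ = m) (.whileDo e st)
        (fun σ => I σ ∧ t σ ≤ m ∧ ¬ istrue e σ)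
  | exist {Z : Type} {U V : Z → StatePred} {s : Stmt} :
      (∀ z, TotHoare (U z) s (V z)) →
      TotHoare (fun σ => ∃ z, U z σ) s (fun σ => ∃ z, V z σ)
  | conseq {U U' Z Z' : StatePred} {s : Stmt} :
      (∀ σ, U σ → U' σ) → TotHoare U' s Z' → (∀ σ, Z' σ → Z σ) →
      TotHoare U s Z

/-!
Completeness goes through strongest postconditions: for every statement `s` and precondition
`U`, the trace predicate `{τ | ∃ σ, U σ ∧ (s,σ) ⇒ τ}` is derivable, by induction on `s`, and the
theorem follows by consequence. For a loop the invariant is the set of states reachable from `U`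
by finitely many complete iterations of the body; that every trace described by the postcondition
of the while rule is an evaluation of the loop is proved by coinduction on evaluation.
-/

lemma Trace.eq_single_or_eq_cons (τ : Trace) :
    (∃ σ, τ = Trace.single σ) ∨ ∃ σ τ', τ = Trace.cons σ τ' := by
  obtain ⟨σ, s⟩ := τ
  cases s with
  | nil => exact Or.inl ⟨σ, rfl⟩
  | cons x s => exact Or.inr ⟨σ, (x, s), rfl⟩

lemma Trace.single_ne_cons (σ σ' : State) (τ : Trace) : Trace.single σ ≠ Trace.cons σ' τ :=
  fun h => Stream'.Seq.nil_ne_cons (congrArg Prod.snd h)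

lemma Trace.cons_inj {σ σ' : State} {τ τ' : Trace} (h : Trace.cons σ τ = Trace.cons σ' τ') :
    σ = σ' ∧ τ = τ' := by
  obtain ⟨hhd, htl⟩ := Stream'.Seq.cons_injective2 (congrArg Prod.snd h)
  exact ⟨congrArg Prod.fst h, Prod.ext hhd htl⟩

section Follows

variable {Q Q' : TracePred}

lemma follows_single_iff {σ : State} {τ' : Trace} :
    Follows Q (Trace.single σ) τ' ↔ τ'.hd = σ ∧ Q τ' := by
  constructor
  · rintro ⟨R, hR, hstep⟩
    rcases hstep _ _ hR with ⟨σ', h, hhd, hQ⟩ | ⟨σ', a', b', h, -, -⟩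
    · obtain rfl : σ = σ' := congrArg Prod.fst h
      exact ⟨hhd, hQ⟩
    · exact absurd h (Trace.single_ne_cons _ _ _)
  · rintro ⟨hhd, hQ⟩
    refine ⟨fun a b => a = Trace.single σ ∧ b = τ', ⟨rfl, rfl⟩, ?_⟩
    rintro _ _ ⟨rfl, rfl⟩
    exact Or.inl ⟨σ, rfl, hhd, hQ⟩

lemma follows_cons_iff {σ : State} {τ τ' : Trace} :
    Follows Q (Trace.cons σ τ) τ' ↔ ∃ τ₀, τ' = Trace.cons σ τ₀ ∧ Follows Q τ τ₀ := by
  constructor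
  · rintro ⟨R, hR, hstep⟩
    rcases hstep _ _ hR with ⟨σ', h, -, -⟩ | ⟨σ', a', b', h, rfl, hR'⟩
    · exact absurd h.symm (Trace.single_ne_cons _ _ _)
    · obtain ⟨rfl, rfl⟩ := Trace.cons_inj h
      exact ⟨b', rfl, R, hR', hstep⟩
  · rintro ⟨τ₀, rfl, R, hR, hstep⟩
    refine ⟨fun a b => R a b ∨ a = Trace.cons σ τ ∧ b = Trace.cons σ τ₀, Or.inr ⟨rfl, rfl⟩, ?_⟩
    rintro a b (hab | ⟨rfl, rfl⟩)
    · rcases hstep a b hab with h | ⟨σ', a', b', ha, hb, hR'⟩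
      exacts [Or.inl h, Or.inr ⟨σ', a', b', ha, hb, Or.inl hR'⟩]
    · exact Or.inr ⟨σ, τ, τ₀, rfl, rfl, Or.inl hR⟩

lemma follows_cons {σ : State} {τ τ' : Trace} (h : Follows Q τ τ') :
    Follows Q (Trace.cons σ τ) (Trace.cons σ τ') :=
  follows_cons_iff.2 ⟨τ', rfl, h⟩

lemma follows_dup_iff {σ : State} {τ' : Trace} :
    Follows Q (Trace.cons σ (Trace.single σ)) τ' ↔
      ∃ τ, τ' = Trace.cons σ τ ∧ τ.hd = σ ∧ Q τ := by
  simp only [follows_cons_iff, follows_single_iff]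

lemma Follows.hd_eq {τ τ' : Trace} (h : Follows Q τ τ') : τ'.hd = τ.hd := by
  rcases τ.eq_single_or_eq_cons with ⟨σ, rfl⟩ | ⟨σ, τ₀, rfl⟩
  · exact (follows_single_iff.1 h).1
  · obtain ⟨τ₀', rfl, -⟩ := follows_cons_iff.1 h
    rfl

lemma Follows.mono (hQ : ∀ τ, Q τ → Q' τ) {τ τ' : Trace} (h : Follows Q τ τ') :
    Follows Q' τ τ' := by
  obtain ⟨R, hR, hstep⟩ := h
  refine ⟨R, hR, fun a b hab => ?_⟩
  rcases hstep a b hab with ⟨σ, ha, hhd, hb⟩ | h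
  exacts [Or.inl ⟨σ, ha, hhd, hQ b hb⟩, Or.inr h]

lemma follows_refl {τ : Trace} (hQ : ∀ σ, Converges τ σ → Q (Trace.single σ)) :
    Follows Q τ τ := by
  refine ⟨fun a b => a = b ∧ ∀ σ, Converges a σ → Q (Trace.single σ), ⟨rfl, hQ⟩, ?_⟩
  rintro a _ ⟨rfl, hQa⟩
  rcases a.eq_single_or_eq_cons with ⟨σ, rfl⟩ | ⟨σ, a', rfl⟩
  · exact Or.inl ⟨σ, rfl, rfl, hQa σ (.single σ)⟩
  · exact Or.inr ⟨σ, a', a', rfl, rfl, rfl, fun σ' h => hQa σ' (.cons σ h)⟩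

end Follows

lemma Chop.mono_right {P Q Q' : TracePred} (hQ : ∀ τ, Q τ → Q' τ) {τ : Trace}
    (h : Chop P Q τ) : Chop P Q' τ :=
  let ⟨τ₀, hP, hF⟩ := h
  ⟨τ₀, hP, hF.mono hQ⟩

lemma chop_sglt_last {P : TracePred} {τ : Trace} (hP : P τ) : Chop P (Sglt (Last P)) τ :=
  ⟨τ, hP, follows_refl fun σ hc => ⟨σ, ⟨τ, hP, hc⟩, rfl⟩⟩

lemma Iter.cases {P : TracePred} {τ : Trace} (h : Iter P τ) :
    (∃ σ, τ = Trace.single σ) ∨ ∃ τ₀, P τ₀ ∧ Follows (Iter P) τ₀ τ := by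
  obtain ⟨X, hX, hstep⟩ := h
  rcases hstep _ hX with ⟨σ, -, rfl⟩ | ⟨τ₀, hP, hF⟩
  exacts [Or.inl ⟨σ, rfl⟩, Or.inr ⟨τ₀, hP, hF.mono fun a ha => ⟨X, ha, hstep⟩⟩]

section Evaluation

variable (E : Stmt → State → Trace → Prop) (ES : Stmt → Trace → Trace → Prop)

inductive EvalRule : Stmt → State → Trace → Prop
  | assign (x : Var) (e : Expr) (σ : State) :
      EvalRule (.assign x e) σ (Trace.cons σ (Trace.single (update σ x (e σ))))
  | skip (σ : State) : EvalRule .skip σ (Trace.single σ)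
  | seq {s₀ s₁ : Stmt} {σ : State} {τ τ' : Trace} :
      E s₀ σ τ → ES s₁ τ τ' → EvalRule (.seq s₀ s₁) σ τ'
  | ifTrue {e : Expr} {st sf : Stmt} {σ : State} {τ : Trace} :
      istrue e σ → ES st (Trace.cons σ (Trace.single σ)) τ → EvalRule (.ifte e st sf) σ τ
  | ifFalse {e : Expr} {st sf : Stmt} {σ : State} {τ : Trace} :
      ¬ istrue e σ → ES sf (Trace.cons σ (Trace.single σ)) τ → EvalRule (.ifte e st sf) σ τ
  | whileTrue {e : Expr} {st : Stmt} {σ : State} {τ τ' : Trace} :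
      istrue e σ → ES st (Trace.cons σ (Trace.single σ)) τ → ES (.whileDo e st) τ τ' →
      EvalRule (.whileDo e st) σ τ'
  | whileFalse {e : Expr} {st : Stmt} {σ : State} :
      ¬ istrue e σ → EvalRule (.whileDo e st) σ (Trace.cons σ (Trace.single σ))

inductive EvalSeqRule : Stmt → Trace → Trace → Prop
  | single {s : Stmt} {σ : State} {τ : Trace} : E s σ τ → EvalSeqRule s (Trace.single σ) τ
  | cons {s : Stmt} {τ τ' : Trace} (σ : State) :
      ES s τ τ' → EvalSeqRule s (Trace.cons σ τ) (Trace.cons σ τ')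

variable {E ES}

lemma evalConsistent_iff : EvalConsistent E ES ↔
    (∀ s σ τ, E s σ τ → EvalRule E ES s σ τ) ∧
      ∀ s τ τ', ES s τ τ' → EvalSeqRule E ES s τ τ' := by
  constructor
  · rintro ⟨hA, hS, hQ, hI, hW, hX⟩
    refine ⟨fun s σ τ h => ?_, fun s τ τ' h => ?_⟩
    · cases s with
      | assign x e => rw [hA x e σ τ h]; exact .assign x e σ
      | skip => rw [hS σ τ h]; exact .skip σ
      | seq s₀ s₁ =>
        obtain ⟨τ₀, h₀, h₁⟩ := hQ _ _ _ _ h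
        exact .seq h₀ h₁
      | ifte e st sf =>
        rcases hI _ _ _ _ _ h with ⟨he, h'⟩ | ⟨he, h'⟩
        exacts [.ifTrue he h', .ifFalse he h']
      | whileDo e st =>
        rcases hW _ _ _ _ h with ⟨he, τ₀, h₀, h₁⟩ | ⟨he, rfl⟩
        exacts [.whileTrue he h₀ h₁, .whileFalse he]
    · rcases hX s τ τ' h with ⟨σ, rfl, h'⟩ | ⟨σ, τ₀, τ₀', rfl, rfl, h'⟩
      exacts [.single h', .cons σ h']
  · rintro ⟨hE, hES⟩
    refine ⟨fun x e σ τ h => ?_, fun σ τ h => ?_, fun s₀ s₁ σ τ' h => ?_,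
      fun e st sf σ τ h => ?_, fun e st σ τ' h => ?_, fun s τ τ' h => ?_⟩
    · cases hE _ _ _ h; rfl
    · cases hE _ _ _ h; rfl
    · cases hE _ _ _ h with | seq h₀ h₁ => exact ⟨_, h₀, h₁⟩
    · cases hE _ _ _ h with
      | ifTrue he h' => exact Or.inl ⟨he, h'⟩
      | ifFalse he h' => exact Or.inr ⟨he, h'⟩
    · cases hE _ _ _ h with
      | whileTrue he h₀ h₁ => exact Or.inl ⟨he, _, h₀, h₁⟩
      | whileFalse he => exact Or.inr ⟨he, rfl⟩
    · cases hES _ _ _ h with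
      | single h' => exact Or.inl ⟨_, rfl, h'⟩
      | cons σ h' => exact Or.inr ⟨σ, _, _, rfl, rfl, h'⟩

variable {E' : Stmt → State → Trace → Prop} {ES' : Stmt → Trace → Trace → Prop}

lemma EvalRule.mono (hE : E ≤ E') (hES : ES ≤ ES') {s : Stmt} {σ : State} {τ : Trace} :
    EvalRule E ES s σ τ → EvalRule E' ES' s σ τ
  | .assign x e σ => .assign x e σ
  | .skip σ => .skip σ
  | .seq h₀ h₁ => .seq (hE _ _ _ h₀) (hES _ _ _ h₁)
  | .ifTrue he h => .ifTrue he (hES _ _ _ h)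
  | .ifFalse he h => .ifFalse he (hES _ _ _ h)
  | .whileTrue he h₀ h₁ => .whileTrue he (hES _ _ _ h₀) (hES _ _ _ h₁)
  | .whileFalse he => .whileFalse he

lemma EvalSeqRule.mono (hE : E ≤ E') (hES : ES ≤ ES') {s : Stmt} {τ τ' : Trace} :
    EvalSeqRule E ES s τ τ' → EvalSeqRule E' ES' s τ τ'
  | .single h => .single (hE _ _ _ h)
  | .cons σ h => .cons σ (hES _ _ _ h)

lemma EvalConsistent.le_exec (hC : EvalConsistent E ES) : E ≤ Exec ∧ ES ≤ ExecSeq :=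
  ⟨fun _ _ _ h => ⟨E, ES, hC, h⟩, fun _ _ _ h => ⟨E, ES, hC, h⟩⟩

lemma evalRule_of_exec {s : Stmt} {σ : State} {τ : Trace} (h : Exec s σ τ) :
    EvalRule Exec ExecSeq s σ τ := by
  obtain ⟨E, ES, hC, h⟩ := h
  exact ((evalConsistent_iff.1 hC).1 s σ τ h).mono hC.le_exec.1 hC.le_exec.2

lemma evalSeqRule_of_execSeq {s : Stmt} {τ τ' : Trace} (h : ExecSeq s τ τ') :
    EvalSeqRule Exec ExecSeq s τ τ' := by
  obtain ⟨E, ES, hC, h⟩ := h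
  exact ((evalConsistent_iff.1 hC).2 s τ τ' h).mono hC.le_exec.1 hC.le_exec.2

theorem exec_coinduct
    (hE : ∀ s σ τ, E s σ τ → EvalRule (E ⊔ Exec) (ES ⊔ ExecSeq) s σ τ)
    (hES : ∀ s τ τ', ES s τ τ' → EvalSeqRule (E ⊔ Exec) (ES ⊔ ExecSeq) s τ τ') :
    E ≤ Exec ∧ ES ≤ ExecSeq := by
  have hC : EvalConsistent (E ⊔ Exec) (ES ⊔ ExecSeq) := by
    refine evalConsistent_iff.2 ⟨?_, ?_⟩
    · rintro s σ τ (h | h)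
      exacts [hE s σ τ h, (evalRule_of_exec h).mono le_sup_right le_sup_right]
    · rintro s τ τ' (h | h)
      exacts [hES s τ τ' h, (evalSeqRule_of_execSeq h).mono le_sup_right le_sup_right]
  exact ⟨le_sup_left.trans hC.le_exec.1, le_sup_left.trans hC.le_exec.2⟩

lemma exec_iff {s : Stmt} {σ : State} {τ : Trace} :
    Exec s σ τ ↔ EvalRule Exec ExecSeq s σ τ := by
  refine ⟨evalRule_of_exec, fun h => ?_⟩
  exact (exec_coinduct (E := fun s σ τ => EvalRule Exec ExecSeq s σ τ) (ES := ⊥)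
    (fun _ _ _ h => h.mono le_sup_right le_sup_right) (fun _ _ _ h => h.elim)).1 s σ τ h

lemma execSeq_iff {s : Stmt} {τ τ' : Trace} :
    ExecSeq s τ τ' ↔ EvalSeqRule Exec ExecSeq s τ τ' := by
  refine ⟨evalSeqRule_of_execSeq, fun h => ?_⟩
  exact (exec_coinduct (E := ⊥) (ES := fun s τ τ' => EvalSeqRule Exec ExecSeq s τ τ')
    (fun _ _ _ h => h.elim) (fun _ _ _ h => h.mono le_sup_right le_sup_right)).2 s τ τ' h

end Evaluation

lemma execSeq_single_iff {s : Stmt} {σ : State} {τ' : Trace} :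
    ExecSeq s (Trace.single σ) τ' ↔ Exec s σ τ' := by
  refine ⟨fun h => ?_, fun h => execSeq_iff.2 (.single h)⟩
  generalize hτ : Trace.single σ = τ at h
  cases execSeq_iff.1 h with
  | single h' =>
    obtain rfl : σ = _ := congrArg Prod.fst hτ
    exact h'
  | cons σ' _ => exact absurd hτ (Trace.single_ne_cons _ _ _)

lemma execSeq_cons_iff {s : Stmt} {σ : State} {τ τ' : Trace} :
    ExecSeq s (Trace.cons σ τ) τ' ↔ ∃ τ₀, τ' = Trace.cons σ τ₀ ∧ ExecSeq s τ τ₀ := by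
  refine ⟨fun h => ?_, fun ⟨τ₀, hτ', h⟩ => hτ' ▸ execSeq_iff.2 (.cons σ h)⟩
  generalize hτ : Trace.cons σ τ = τc at h
  cases execSeq_iff.1 h with
  | single _ => exact absurd hτ.symm (Trace.single_ne_cons _ _ _)
  | cons σ' h' =>
    obtain ⟨rfl, rfl⟩ := Trace.cons_inj hτ
    exact ⟨_, rfl, h'⟩

lemma execSeq_dup {s : Stmt} {σ : State} {τ : Trace} (h : Exec s σ τ) :
    ExecSeq s (Trace.cons σ (Trace.single σ)) (Trace.cons σ τ) :=
  execSeq_cons_iff.2 ⟨τ, rfl, execSeq_single_iff.2 h⟩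

lemma Exec.hd_eq {s : Stmt} {σ : State} {τ : Trace} (h : Exec s σ τ) : τ.hd = σ := by
  induction s generalizing σ τ with
  | seq s₀ s₁ ih₀ ih₁ =>
    cases exec_iff.1 h with
    | @seq _ _ _ τ₀ _ h₀ h₁ =>
      have hτ₀ := ih₀ h₀
      rcases τ₀.eq_single_or_eq_cons with ⟨σ', rfl⟩ | ⟨σ', τ₁, rfl⟩
      · exact (ih₁ (execSeq_single_iff.1 h₁)).trans hτ₀
      · obtain ⟨_, rfl, -⟩ := execSeq_cons_iff.1 h₁
        exact hτ₀
  | whileDo e st =>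
    cases exec_iff.1 h with
    | whileTrue _ h₀ h₁ =>
      obtain ⟨_, rfl, -⟩ := execSeq_cons_iff.1 h₀
      obtain ⟨_, rfl, -⟩ := execSeq_cons_iff.1 h₁
      rfl
    | whileFalse _ => rfl
  | ifte e st sf =>
    cases exec_iff.1 h with
    | ifTrue _ h' | ifFalse _ h' => obtain ⟨_, rfl, -⟩ := execSeq_cons_iff.1 h'; rfl
  | _ => cases exec_iff.1 h; rfl

lemma execSeq_of_follows {Q : TracePred} {s : Stmt} (hQ : ∀ τ, Q τ → Exec s τ.hd τ)
    {τ τ' : Trace} (h : Follows Q τ τ') : ExecSeq s τ τ' := by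
  refine (exec_coinduct (E := ⊥) (ES := fun s' a b => s' = s ∧ Follows Q a b)
    (fun _ _ _ h => h.elim) ?_).2 s τ τ' ⟨rfl, h⟩
  rintro _ a b ⟨rfl, hF⟩
  rcases a.eq_single_or_eq_cons with ⟨σ, rfl⟩ | ⟨σ, a', rfl⟩
  · obtain ⟨rfl, hb⟩ := follows_single_iff.1 hF
    exact .single (Or.inr (hQ b hb))
  · obtain ⟨b', rfl, hF'⟩ := follows_cons_iff.1 hF
    exact .cons σ (Or.inl ⟨rfl, hF'⟩)

theorem exec_whileDo_of_follows {e : Expr} {st : Stmt} {P : TracePred} {I : StatePred}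
    (hP : ∀ τ, P τ → ∃ σ, istrue e σ ∧ Exec st σ τ) {σ : State} {τ : Trace}
    (h : Follows (Chop (Iter (Chop P (Dup I))) (Sglt fun σ => ¬ istrue e σ))
      (Trace.cons σ (Trace.single σ)) τ) :
    Exec (.whileDo e st) σ τ := by
  refine (exec_coinduct
    (E := fun s σ τ => s = .whileDo e st ∧
      Follows (Chop (Iter (Chop P (Dup I))) (Sglt fun σ => ¬ istrue e σ))
        (Trace.cons σ (Trace.single σ)) τ)
    -- `b` extends the body run `a` by a doubleton, the remaining iterations and the exit
    (ES := fun s a b => s = .whileDo e st ∧ ∃ τa τb, Follows (Dup I) a τa ∧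
      Follows (Iter (Chop P (Dup I))) τa τb ∧ Follows (Sglt fun σ => ¬ istrue e σ) τb b)
    ?_ ?_).1 _ σ τ ⟨rfl, h⟩
  · rintro _ σ _ ⟨rfl, hF⟩
    obtain ⟨τ₁, rfl, hhd, τit, hIt, hFit⟩ := follows_dup_iff.1 hF
    rcases hIt.cases with ⟨σ', rfl⟩ | ⟨τ₀, ⟨τb, hPb, hFb⟩, hFit₀⟩
    · obtain ⟨-, σ'', he, rfl⟩ := follows_single_iff.1 hFit
      obtain rfl : σ'' = σ := hhd
      exact .whileFalse he
    · obtain ⟨σ', he, hEx⟩ := hP τb hPb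
      obtain rfl : σ' = σ :=
        hEx.hd_eq.symm.trans (hFb.hd_eq.symm.trans (hFit₀.hd_eq.symm.trans
          (hFit.hd_eq.symm.trans hhd)))
      exact .whileTrue he (Or.inr (execSeq_dup hEx))
        (Or.inl ⟨rfl, _, _, follows_cons hFb, follows_cons hFit₀, follows_cons hFit⟩)
  · rintro _ a b ⟨rfl, τa, τb, hFa, hFit, hFb⟩
    rcases a.eq_single_or_eq_cons with ⟨σ, rfl⟩ | ⟨σ, a', rfl⟩
    · obtain ⟨hhd, σ', -, rfl⟩ := follows_single_iff.1 hFa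
      obtain rfl : σ' = σ := hhd
      obtain ⟨τb', rfl, hhd', hIt⟩ := follows_dup_iff.1 hFit
      obtain ⟨b', rfl, hFb'⟩ := follows_cons_iff.1 hFb
      exact .single (Or.inl ⟨rfl, follows_dup_iff.2 ⟨b', rfl, hFb'.hd_eq.trans hhd', τb', hIt, hFb'⟩⟩)
    · obtain ⟨τa', rfl, hFa'⟩ := follows_cons_iff.1 hFa
      obtain ⟨τb', rfl, hFit'⟩ := follows_cons_iff.1 hFit
      obtain ⟨b', rfl, hFb'⟩ := follows_cons_iff.1 hFb
      exact .cons σ (Or.inl ⟨rfl, τa', τb', hFa', hFit', hFb'⟩)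

def StrongestPost (U : StatePred) (s : Stmt) : TracePred := fun τ => ∃ σ, U σ ∧ Exec s σ τ

inductive LoopReach (U : StatePred) (e : Expr) (st : Stmt) : StatePred
  | init {σ : State} : U σ → LoopReach U e st σ
  | step {σ σ' : State} {τ : Trace} : LoopReach U e st σ → istrue e σ → Exec st σ τ →
      Converges τ σ' → LoopReach U e st σ'

lemma THoare.mono_post {U : StatePred} {s : Stmt} {P Q : TracePred} (h : THoare U s P)
    (hPQ : ∀ τ, P τ → Q τ) : THoare U s Q :=
  .conseq (fun _ hU => hU) h hPQ

lemma strongestPost_seq {U V : StatePred} {s₀ s₁ : Stmt} {τ : Trace}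
    (h : Chop (StrongestPost U s₀) (StrongestPost V s₁) τ) :
    StrongestPost U (.seq s₀ s₁) τ := by
  obtain ⟨τ₀, ⟨σ, hU, hEx⟩, hF⟩ := h
  refine ⟨σ, hU, exec_iff.2 (.seq hEx (execSeq_of_follows ?_ hF))⟩
  rintro τ ⟨σ', -, hEx'⟩
  rwa [hEx'.hd_eq]

lemma strongestPost_ifte {U : StatePred} {e : Expr} {st sf : Stmt} {τ : Trace}
    (h : Chop (Dup U) (fun τ => StrongestPost (fun σ => istrue e σ ∧ U σ) st τ ∨
      StrongestPost (fun σ => ¬ istrue e σ ∧ U σ) sf τ) τ) :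
    StrongestPost U (.ifte e st sf) τ := by
  obtain ⟨_, ⟨σ, hU, rfl⟩, hF⟩ := h
  obtain ⟨τ₁, rfl, hhd, ⟨σ', ⟨he, -⟩, hEx⟩ | ⟨σ', ⟨he, -⟩, hEx⟩⟩ := follows_dup_iff.1 hF
  · obtain rfl : σ' = σ := hEx.hd_eq.symm.trans hhd
    exact ⟨σ', hU, exec_iff.2 (.ifTrue he (execSeq_dup hEx))⟩
  · obtain rfl : σ' = σ := hEx.hd_eq.symm.trans hhd
    exact ⟨σ', hU, exec_iff.2 (.ifFalse he (execSeq_dup hEx))⟩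

theorem tHoare_strongestPost (s : Stmt) (U : StatePred) :
    THoare U s (StrongestPost U s) := by
  induction s generalizing U with
  | assign x e =>
    refine (THoare.assign U x e).mono_post ?_
    rintro _ ⟨σ, hU, rfl⟩
    exact ⟨σ, hU, exec_iff.2 (.assign x e σ)⟩
  | skip =>
    refine (THoare.skip U).mono_post ?_
    rintro _ ⟨σ, hU, rfl⟩
    exact ⟨σ, hU, exec_iff.2 (.skip σ)⟩
  | seq s₀ s₁ ih₀ ih₁ =>
    exact (((ih₀ U).mono_post fun _ => chop_sglt_last).seq (ih₁ _)).mono_post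
      fun _ => strongestPost_seq
  | ifte e st sf ih_t ih_f =>
    exact (THoare.ifte ((ih_t _).mono_post fun _ => Or.inl)
      ((ih_f _).mono_post fun _ => Or.inr)).mono_post fun _ => strongestPost_ifte
  | whileDo e st ih =>
    let I := LoopReach U e st
    have hbody : THoare (fun σ => istrue e σ ∧ I σ) st
        (Chop (StrongestPost (fun σ => istrue e σ ∧ I σ) st) (Sglt I)) :=
      (ih _).mono_post fun _ hτ => (chop_sglt_last hτ).mono_right
        fun _ ⟨σ', ⟨_, ⟨_, ⟨he, hI⟩, hEx⟩, hc⟩, hτ'⟩ => ⟨σ', hI.step he hEx hc, hτ'⟩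
    refine (THoare.whileDo (fun _ => LoopReach.init) hbody).mono_post ?_
    rintro _ ⟨_, ⟨σ, hU, rfl⟩, hF⟩
    exact ⟨σ, hU, exec_whileDo_of_follows (fun _ ⟨σ, ⟨he, _⟩, hEx⟩ => ⟨σ, he, hEx⟩) hF⟩

theorem tHoare_complete_general (s : Stmt) (U : StatePred) (P : TracePred)
    (h : ∀ (σ : State) (τ : Trace), U σ → Exec s σ τ → P τ) :
    THoare U s P :=
  (tHoare_strongestPost s U).mono_post fun τ ⟨σ, hU, hEx⟩ => h σ τ hU hEx

/-- Completeness of the trace-based Hoare logic. -/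
theorem tHoare_complete (s : Stmt) (U : StatePred) (P : TracePred)
    (hP : IsSetoidPred P)
    (h : ∀ (σ : State) (τ : Trace), U σ → Exec s σ τ → P τ) :
    THoare U s P :=
  tHoare_complete_general s U P h

end WhileTrace
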